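/- For every distributive lattice L of finite length one has s(L) = δ(L) = j(L); in particular L is finite (of cardinality at most 2^{j(L)}). -/

import Mathlib

/-- The length of a lattice of finite length: the supremum of lengths of chains. -/
noncomputable def latticeLength (L : Type*) [Preorder L] : ℕ :=
  sSup {n : ℕ | ∃ c : LTSeries L, c.length = n}

/-- `[c,d]` is the upper transpose of `[a,b]`, i.e. `[a,b] ↗ [c,d]`. -/
def UpperTranspose {L : Type*} [Lattice L] (a b c d : L) : Prop :=
  a = b ⊓ c ∧ d = b ⊔ c

/-- Two coverings are transposed (one is an upper transpose of the other). -/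
def TranspCov {L : Type*} [Lattice L] (x y : L × L) : Prop :=
  x.1 ⋖ x.2 ∧ y.1 ⋖ y.2 ∧
    (UpperTranspose x.1 x.2 y.1 y.2 ∨ UpperTranspose y.1 y.2 x.1 x.2)

section AuxLemmas
variable {L : Type*} [DistribLattice L] [BoundedOrder L]

omit [BoundedOrder L] in
lemma myWfLT (hFL : ∃ N : ℕ, ∀ c : LTSeries L, c.length ≤ N) : WellFoundedLT L := by
  obtain ⟨N, hN⟩ := hFL
  constructor
  rw [RelEmbedding.wellFounded_iff_isEmpty]
  constructor
  intro f
  have key : ∀ i j : ℕ, i < j → f j < f i := fun i j h => f.map_rel_iff.mpr h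
  let c : LTSeries L := ⟨N + 1, fun i => f (N + 1 - i), fun i => by
    apply key
    have h1 : (i.succ : ℕ) = (i : ℕ) + 1 := rfl
    have h2 : (i.castSucc : ℕ) = (i : ℕ) := rfl
    rw [h1, h2]
    have := i.isLt
    omega⟩
  have := hN c
  simp only [c, RelSeries.length] at this
  omega

lemma chain_of_irreds : ∀ (n : ℕ) (S : Finset L), S.card = n → (∀ p ∈ S, SupIrred p) →
    ∃ c : LTSeries L, c.length = n ∧ c.last = S.sup id := by
  intro n
  induction n with
  | zero =>
    intro S hcard _
    rw [Finset.card_eq_zero] at hcard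
    subst hcard
    exact ⟨RelSeries.singleton _ ⊥, rfl, by rw [RelSeries.last_singleton, Finset.sup_empty]⟩
  | succ n ih =>
    intro S hcard hS
    classical
    have hne : S.Nonempty := Finset.card_pos.mp (by omega)
    obtain ⟨p, hpS, hmax⟩ := Set.Finite.exists_maximalFor id _ (S : Set L).toFinite
      (by simpa using hne)
    simp only [Finset.mem_coe, id] at hpS hmax
    obtain ⟨c, hlen, hlast⟩ := ih (S.erase p)
      (by rw [Finset.card_erase_of_mem hpS, hcard]; rfl)
      (fun q hq => hS q (Finset.mem_of_mem_erase hq))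
    have hlt : (S.erase p).sup id < S.sup id := by
      refine lt_of_le_of_ne (Finset.sup_mono (Finset.erase_subset _ _)) ?_
      intro he
      have hp : p ≤ (S.erase p).sup id := by
        rw [he]; exact Finset.le_sup (f := id) hpS
      obtain ⟨q, hq, hpq⟩ := ((hS p hpS).supPrime.le_finset_sup).1 hp
      have hq' := Finset.mem_of_mem_erase hq
      have hne' : q ≠ p := Finset.ne_of_mem_erase hq
      exact hne' (le_antisymm (hmax hq' hpq) hpq)
    refine ⟨c.snoc (S.sup id) (by rw [hlast]; exact hlt), by simp [hlen], by simp⟩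

lemma irred_set_finite {N : ℕ} (hN : ∀ c : LTSeries L, c.length ≤ N) :
    {p : L | SupIrred p}.Finite := by
  by_contra h
  have hinf : {p : L | SupIrred p}.Infinite := h
  obtain ⟨t, hts, hcard⟩ := hinf.exists_subset_card_eq (N + 1)
  obtain ⟨c, hlen, -⟩ := chain_of_irreds (N + 1) t hcard (fun p hp => hts hp)
  have := hN c
  omega

lemma le_of_irred_le [WellFoundedLT L] {a b : L}
    (h : ∀ p : L, SupIrred p → p ≤ a → p ≤ b) : a ≤ b := by
  obtain ⟨s, hsup, hs⟩ := exists_supIrred_decomposition a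
  rw [← hsup]
  exact Finset.sup_le fun q hq => h q (hs hq) (hsup ▸ Finset.le_sup (f := id) hq)

lemma my_finite (hFL : ∃ N : ℕ, ∀ c : LTSeries L, c.length ≤ N) : Finite L := by
  obtain ⟨N, hN⟩ := hFL
  haveI := myWfLT (L := L) ⟨N, hN⟩
  haveI : Finite {p : L // SupIrred p} := (irred_set_finite hN).to_subtype
  refine Finite.of_injective (fun a => {p : {p : L // SupIrred p} | p.1 ≤ a}) ?_
  intro a b hab
  refine le_antisymm (le_of_irred_le fun p hp hpa => ?_) (le_of_irred_le fun p hp hpb => ?_)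
  · exact Set.ext_iff.mp hab ⟨p, hp⟩ |>.mp hpa
  · exact Set.ext_iff.mp hab ⟨p, hp⟩ |>.mpr hpb

lemma covby_exists_witness [WellFoundedLT L] {a b : L} (hab : a ⋖ b) :
    ∃ p : L, SupIrred p ∧ p ≤ b ∧ ¬ p ≤ a := by
  by_contra h
  push_neg at h
  obtain ⟨s, hsup, hs⟩ := exists_supIrred_decomposition b
  have hba : b ≤ a := by
    rw [← hsup]
    exact Finset.sup_le fun q hq => h q (hs hq) (hsup ▸ Finset.le_sup (f := id) hq)
  exact hab.lt.not_ge hba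

omit [BoundedOrder L] in
lemma covby_witness_unique {a b p q : L} (hab : a ⋖ b)
    (hp : SupIrred p) (hpb : p ≤ b) (hpa : ¬ p ≤ a)
    (hq : SupIrred q) (hqb : q ≤ b) (hqa : ¬ q ≤ a) : p = q := by
  have hb : a ⊔ p = b := by
    rcases hab.eq_or_eq le_sup_left (sup_le hab.lt.le hpb) with h | h
    · exact absurd (h ▸ le_sup_right) hpa
    · exact h
  have hb' : a ⊔ q = b := by
    rcases hab.eq_or_eq le_sup_left (sup_le hab.lt.le hqb) with h | h
    · exact absurd (h ▸ le_sup_right) hqa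
    · exact h
  have h1 : p ≤ q := by
    rcases hp.supPrime.le_sup.mp (hb' ▸ hpb) with h | h
    · exact absurd h hpa
    · exact h
  have h2 : q ≤ p := by
    rcases hq.supPrime.le_sup.mp (hb ▸ hqb) with h | h
    · exact absurd h hqa
    · exact h
  exact le_antisymm h1 h2

omit [BoundedOrder L] in
lemma unique_lower_cover {p x y : L} (hp : SupIrred p) (hx : x ⋖ p) (hy : y ⋖ p) : x = y := by
  rcases hx.eq_or_eq le_sup_left (sup_le hx.lt.le hy.lt.le) with h | h
  · have hyx : y ≤ x := le_sup_right.trans h.le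
    rcases eq_or_lt_of_le hyx with h' | h'
    · exact h'.symm
    · exact absurd hx.lt (hy.2 h')
  · rcases hp.2 h with h' | h'
    · exact absurd h' hx.lt.ne
    · exact absurd h' hy.lt.ne

lemma length_le [WellFoundedLT L] [Fintype {p : L // SupIrred p}] (c : LTSeries L) :
    c.length ≤ Fintype.card {p : L // SupIrred p} := by
  classical
  let g : ℕ → Finset {p : L // SupIrred p} := fun k =>
    Finset.univ.filter (fun p => p.1 ≤ c ⟨min k c.length, by omega⟩)
  have hmono : ∀ k, k < c.length → g k ⊂ g (k + 1) := by
    intro k hk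
    have hlt : c ⟨min k c.length, by omega⟩ < c ⟨min (k + 1) c.length, by omega⟩ :=
      c.strictMono (by rw [Fin.lt_def]; simp; omega)
    constructor
    · intro p hp
      simp only [g, Finset.mem_filter, Finset.mem_univ, true_and] at hp ⊢
      exact hp.trans hlt.le
    · intro hsub
      refine absurd hlt (not_lt_of_ge (le_of_irred_le fun p hp hple => ?_))
      have hmem : (⟨p, hp⟩ : {p : L // SupIrred p}) ∈ g (k + 1) := by
        simp only [g, Finset.mem_filter, Finset.mem_univ, true_and]; exact hple
      have := hsub hmem
      simpa only [g, Finset.mem_filter, Finset.mem_univ, true_and] using this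
  have hcard : ∀ k, k ≤ c.length → k ≤ (g k).card := by
    intro k
    induction k with
    | zero => intro _; omega
    | succ k ih =>
      intro hk
      have h1 := Finset.card_lt_card (hmono k (by omega))
      have h2 := ih (by omega)
      omega
  calc c.length ≤ (g c.length).card := hcard _ le_rfl
    _ ≤ Fintype.card {p : L // SupIrred p} := by
        rw [← Finset.card_univ]; exact Finset.card_le_card (Finset.subset_univ _)

end AuxLemmas

/-- For every distributive lattice `L` of finite length: `s(L) = δ(L) = j(L)`
(where `s(L)` is the number of homogeneous-projectivity classes of coverings);
in particular `L` is finite of cardinality at most `2 ^ j(L)`. -/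
theorem distrib_s_eq_delta_eq_j
    {L : Type*} [DistribLattice L] [BoundedOrder L]
    (hFL : ∃ N : ℕ, ∀ c : LTSeries L, c.length ≤ N) :
    Nat.card (Quot fun x y : {pq : L × L // pq.1 ⋖ pq.2} => TranspCov x.val y.val)
        = latticeLength L ∧
    latticeLength L = Nat.card {p : L // SupIrred p} ∧
    Finite L ∧
    Nat.card L ≤ 2 ^ Nat.card {p : L // SupIrred p} := by
  classical
  obtain ⟨N, hN⟩ := hFL
  haveI wf := myWfLT (L := L) ⟨N, hN⟩
  haveI hfin : Finite L := my_finite ⟨N, hN⟩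
  haveI : Fintype L := Fintype.ofFinite L
  have hJcard : Nat.card {p : L // SupIrred p} = Fintype.card {p : L // SupIrred p} :=
    Nat.card_eq_fintype_card
  -- δ(L) = j(L)
  have hdelta : latticeLength L = Nat.card {p : L // SupIrred p} := by
    rw [hJcard]
    have hub : ∀ n ∈ {n : ℕ | ∃ c : LTSeries L, c.length = n},
        n ≤ Fintype.card {p : L // SupIrred p} := by
      rintro n ⟨c, rfl⟩; exact length_le c
    have hmem : Fintype.card {p : L // SupIrred p} ∈
        {n : ℕ | ∃ c : LTSeries L, c.length = n} := by
      obtain ⟨c, hc, -⟩ := chain_of_irreds (Fintype.card {p : L // SupIrred p})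
        (Finset.univ.filter (fun p => SupIrred p))
        (by rw [Fintype.card_subtype]) (fun p hp => by simpa using hp)
      exact ⟨c, hc⟩
    exact le_antisymm (csSup_le ⟨0, RelSeries.singleton _ ⊥, rfl⟩ hub)
      (le_csSup ⟨Fintype.card {p : L // SupIrred p}, hub⟩ hmem)
  -- cardinality bound
  have hcardbd : Nat.card L ≤ 2 ^ Nat.card {p : L // SupIrred p} := by
    have hinj : Function.Injective
        (fun a : L => {p : {p : L // SupIrred p} | p.1 ≤ a}) := by
      intro a b hab
      refine le_antisymm (le_of_irred_le fun p hp hpa => ?_)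
        (le_of_irred_le fun p hp hpb => ?_)
      · exact Set.ext_iff.mp hab ⟨p, hp⟩ |>.mp hpa
      · exact Set.ext_iff.mp hab ⟨p, hp⟩ |>.mpr hpb
    calc Nat.card L ≤ Nat.card (Set {p : L // SupIrred p}) :=
          Nat.card_le_card_of_injective _ hinj
      _ = 2 ^ Nat.card {p : L // SupIrred p} := by
          rw [Nat.card_eq_fintype_card, Nat.card_eq_fintype_card, Fintype.card_set]
  -- s(L) = j(L)
  set Cov := {pq : L × L // pq.1 ⋖ pq.2} with hCov
  set R : Cov → Cov → Prop := fun x y => TranspCov x.val y.val with hR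
  let F : Cov → {p : L // SupIrred p} := fun e =>
    ⟨(covby_exists_witness e.2).choose, (covby_exists_witness e.2).choose_spec.1⟩
  have hF : ∀ e : Cov, (F e).1 ≤ e.1.2 ∧ ¬ (F e).1 ≤ e.1.1 := fun e =>
    ⟨(covby_exists_witness e.2).choose_spec.2.1, (covby_exists_witness e.2).choose_spec.2.2⟩
  have hFuniq : ∀ (e : Cov) (q : L), SupIrred q → q ≤ e.1.2 → ¬ q ≤ e.1.1 → (F e).1 = q :=
    fun e q hq h1 h2 => covby_witness_unique e.2 (F e).2 (hF e).1 (hF e).2 hq h1 h2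
  have main : ∀ u v : Cov, UpperTranspose u.1.1 u.1.2 v.1.1 v.1.2 → F u = F v := by
    rintro u v ⟨h1, h2⟩
    refine Subtype.ext ((hFuniq v (F u).1 (F u).2 ?_ ?_).symm)
    · exact (hF u).1.trans (h2 ▸ le_sup_left)
    · intro hc
      exact (hF u).2 (h1 ▸ le_inf (hF u).1 hc)
  have hinv : ∀ x y : Cov, TranspCov x.val y.val → F x = F y := by
    rintro x y ⟨hx, hy, hor | hor⟩
    · exact main x y hor
    · exact (main y x hor).symm
  let G : Quot R → {p : L // SupIrred p} := Quot.lift F hinv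
  have hb : ∀ e : Cov, e.1.1 ⊔ (F e).1 = e.1.2 := by
    intro e
    rcases e.2.eq_or_eq le_sup_left (sup_le e.2.lt.le (hF e).1) with h | h
    · exact absurd (h ▸ le_sup_right) (hF e).2
    · exact h
  have cov : ∀ e : Cov, e.1.1 ⊓ (F e).1 ⋖ (F e).1 := fun e =>
    inf_covBy_of_covBy_sup_left (by rw [hb e]; exact e.2)
  have hmk : ∀ e : Cov,
      Quot.mk R e = Quot.mk R ⟨(e.1.1 ⊓ (F e).1, (F e).1), cov e⟩ := by
    intro e
    refine (Quot.sound ?_).symm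
    refine ⟨cov e, e.2, Or.inl ⟨?_, ?_⟩⟩
    · exact inf_comm _ _
    · rw [sup_comm]; exact (hb e).symm
  have hGsurj : Function.Surjective G := by
    rintro ⟨p, hp⟩
    have hne : {y : L | y < p}.Nonempty := ⟨⊥, bot_lt_iff_ne_bot.mpr hp.ne_bot⟩
    obtain ⟨x, hx, hmax⟩ := Set.Finite.exists_maximalFor id _ (Set.toFinite _) hne
    simp only [Set.mem_setOf_eq, id] at hx hmax
    have hcov : x ⋖ p := ⟨hx, fun z hxz hzp => hxz.ne (le_antisymm hxz.le (hmax hzp hxz.le))⟩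
    refine ⟨Quot.mk R ⟨(x, p), hcov⟩, ?_⟩
    show F ⟨(x, p), hcov⟩ = ⟨p, hp⟩
    exact Subtype.ext (hFuniq ⟨(x, p), hcov⟩ p hp le_rfl (not_le_of_gt hx))
  have hGinj : Function.Injective G := by
    intro q1 q2 h
    obtain ⟨e1, rfl⟩ := Quot.exists_rep q1
    obtain ⟨e2, rfl⟩ := Quot.exists_rep q2
    have hp : F e1 = F e2 := h
    have h2 : e2.1.1 ⊓ (F e1).1 ⋖ (F e1).1 := by rw [hp]; exact cov e2
    have heq : e1.1.1 ⊓ (F e1).1 = e2.1.1 ⊓ (F e1).1 :=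
      unique_lower_cover (F e1).2 (cov e1) h2
    have hmid : (⟨(e1.1.1 ⊓ (F e1).1, (F e1).1), cov e1⟩ : Cov)
        = ⟨(e2.1.1 ⊓ (F e2).1, (F e2).1), cov e2⟩ := by
      apply Subtype.ext
      apply Prod.ext
      · show e1.1.1 ⊓ (F e1).1 = e2.1.1 ⊓ (F e2).1
        rw [← hp]; exact heq
      · exact congrArg Subtype.val hp
    rw [hmk e1, hmk e2, hmid]
  have hs : Nat.card (Quot R) = Nat.card {p : L // SupIrred p} :=
    Nat.card_eq_of_bijective G ⟨hGinj, hGsurj⟩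
  exact ⟨by rw [hs, ← hdelta], hdelta, hfin, hcardbd⟩
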